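/- Let ζ ∈ C[0,1] with ζ(0)=ζ(1)=0, ζ ≥ 0, and θ ∈ [0,1). With ζ^(θ)(x) = ζ(θ⊕x) + ζ(θ) - 2ζ̌(θ⊕x, θ) and d_g(x,y) = g(x)+g(y)-2ǧ(x,y), one has d_{ζ^(θ)}(x,y) = d_ζ(x⊕θ, y⊕θ) for all x, y ∈ [0,1]. -/

import Mathlib

/-!
`ζ^(θ)(v) = d_ζ(v ⊕ θ, θ)` is the distance to `θ` in the tree coded by `ζ`, so
`d_{ζ^(θ)}(x, y) = d_ζ(x ⊕ θ, y ⊕ θ)` says that the minimum of `ζ^(θ)` on `[x, y]` is the Gromov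
product `(x ⊕ θ | y ⊕ θ)_θ = (d(x ⊕ θ, θ) + d(y ⊕ θ, θ) - d(x ⊕ θ, y ⊕ θ)) / 2`.
For `c` outside `[a, b]` the minimum of `v ↦ d_ζ(v, c)` over `[a, b]` is indeed `(a | b)_c`: it
is bounded below by it through the identity `ζ̌(c, b) = min (ζ̌(c, a)) (ζ̌(a, b))`, and attained at
the first point of `[a, b]` where `ζ` reaches `max (ζ̌(c, a)) (ζ̌(a, b))`.
If `[x, y]` does not contain the wrap-around point `1 - θ`, the rotation is a translation on it and
this applies directly; otherwise split `[x, y]` there, use that `0` and `1` both code the root,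
and combine the two halves with the same three-point identity for `ζ̌`.
-/

open Set

/-- Addition modulo 1, for `a = θ + x` with `θ ∈ [0,1)` and `x ∈ [0,1]`. -/
noncomputable def wrap (a : ℝ) : ℝ := if a < 1 then a else a - 1

/-- `ǧ(x,y) = min{g(u) : u ∈ [x∧y, x∨y]}`. -/
noncomputable def minOnG (g : ℝ → ℝ) (x y : ℝ) : ℝ := sInf (g '' Set.uIcc x y)

/-- The tree pseudometric `d_g(x,y) = g(x) + g(y) - 2ǧ(x,y)`. -/
noncomputable def treeDist (g : ℝ → ℝ) (x y : ℝ) : ℝ := g x + g y - 2 * minOnG g x y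

/-- The rerooted excursion `ζ^(θ)(x) = ζ(θ⊕x) + ζ(θ) - 2ζ̌(θ⊕x, θ)`. -/
noncomputable def rerootZ (ζ : ℝ → ℝ) (θ : ℝ) : ℝ → ℝ :=
  fun x => ζ (wrap (θ + x)) + ζ θ - 2 * minOnG ζ (wrap (θ + x)) θ

open scoped Interval

section MinOnG

variable {f g : ℝ → ℝ} {x y z u c : ℝ}

lemma minOnG_comm (g : ℝ → ℝ) (x y : ℝ) : minOnG g x y = minOnG g y x := by
  rw [minOnG, minOnG, uIcc_comm]

lemma treeDist_comm (g : ℝ → ℝ) (x y : ℝ) : treeDist g x y = treeDist g y x := by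
  rw [treeDist, treeDist, minOnG_comm, add_comm (g x)]

lemma minOnG_congr (h : EqOn f g [[x, y]]) : minOnG f x y = minOnG g x y := by
  rw [minOnG, minOnG, h.image_eq]

lemma minOnG_comp_const_add (g : ℝ → ℝ) (a x y : ℝ) :
    minOnG (fun v => g (a + v)) x y = minOnG g (a + x) (a + y) := by
  rw [minOnG, minOnG, ← image_const_add_uIcc, image_image]

lemma minOnG_comp_neg (g : ℝ → ℝ) (x y : ℝ) :
    minOnG (fun v => g (-v)) x y = minOnG g (-x) (-y) := by
  rw [minOnG, minOnG, ← image_neg_uIcc, image_image]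

lemma treeDist_comp_neg (g : ℝ → ℝ) (x y : ℝ) :
    treeDist (fun v => g (-v)) x y = treeDist g (-x) (-y) := by
  rw [treeDist, treeDist, minOnG_comp_neg]

lemma minOnG_le (hg : BddBelow (g '' [[x, y]])) (hu : u ∈ [[x, y]]) : minOnG g x y ≤ g u :=
  csInf_le hg (mem_image_of_mem g hu)

lemma le_minOnG (h : ∀ u ∈ [[x, y]], c ≤ g u) : c ≤ minOnG g x y :=
  le_csInf (nonempty_uIcc.image g) (forall_mem_image.2 h)

lemma minOnG_eq_min (hg : BddBelow (g '' [[x, z]])) (hy : y ∈ [[x, z]]) :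
    minOnG g x z = min (minOnG g x y) (minOnG g y z) := by
  have hxy : [[x, y]] ⊆ [[x, z]] := uIcc_subset_uIcc left_mem_uIcc hy
  have hyz : [[y, z]] ⊆ [[x, z]] := uIcc_subset_uIcc hy right_mem_uIcc
  rw [minOnG, minOnG, minOnG, ← (union_subset hxy hyz).antisymm uIcc_subset_uIcc_union_uIcc,
    image_union, csInf_union (hg.mono (image_mono hxy)) (nonempty_uIcc.image g)
      (hg.mono (image_mono hyz)) (nonempty_uIcc.image g)]

end MinOnG

section Continuous

variable {ζ : ℝ → ℝ} {x y u a b L : ℝ}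

lemma minOnG_le_of_continuousOn (hζ : ContinuousOn ζ [[x, y]]) (hu : u ∈ [[x, y]]) :
    minOnG ζ x y ≤ ζ u :=
  minOnG_le (isCompact_uIcc.image_of_continuousOn hζ).bddBelow hu

lemma exists_eq_minOnG (hζ : ContinuousOn ζ [[x, y]]) : ∃ v ∈ [[x, y]], ζ v = minOnG ζ x y :=
  (isCompact_uIcc.image_of_continuousOn hζ).sInf_mem (nonempty_uIcc.image ζ)

lemma treeDist_nonneg (hζ : ContinuousOn ζ [[x, y]]) : 0 ≤ treeDist ζ x y := by
  have hx := minOnG_le_of_continuousOn hζ left_mem_uIcc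
  have hy := minOnG_le_of_continuousOn hζ right_mem_uIcc
  rw [treeDist]
  linarith

lemma exists_first_eq_of_continuousOn (hab : a ≤ b) (hζ : ContinuousOn ζ (Icc a b))
    (hLa : L ≤ ζ a) (hLb : ζ b ≤ L) : ∃ v ∈ Icc a b, ζ v = L ∧ ∀ u ∈ Icc a v, L ≤ ζ u := by
  set T := Icc a b ∩ ζ ⁻¹' {L}
  have hT : T.Nonempty := intermediate_value_Icc' hab hζ ⟨hLb, hLa⟩
  have hTb : BddBelow T := ⟨a, fun u hu => hu.1.1⟩
  obtain ⟨hv, hζv⟩ := (hζ.preimage_isClosed_of_isClosed isClosed_Icc isClosed_singleton).csInf_mem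
    hT hTb
  refine ⟨sInf T, hv, hζv, fun u hu => ?_⟩
  by_contra! hlt
  have hub : u ≤ b := hu.2.trans hv.2
  obtain ⟨w, hw, hζw⟩ := intermediate_value_Icc' hu.1 (hζ.mono (Icc_subset_Icc le_rfl hub))
    ⟨hlt.le, hLa⟩
  have hTw : sInf T ≤ w := csInf_le hTb ⟨⟨hw.1, hw.2.trans hub⟩, hζw⟩
  rw [le_antisymm hu.2 (hTw.trans hw.2), mem_singleton_iff.1 hζv] at hlt
  exact hlt.false

end Continuous

section Gromov

variable {ζ : ℝ → ℝ} {a b c v : ℝ}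

lemma minOnG_eq_min_of_le_of_le (hζ : ContinuousOn ζ (Icc c v)) (hca : c ≤ a) (hav : a ≤ v) :
    minOnG ζ v c = min (minOnG ζ a c) (minOnG ζ a v) := by
  rw [minOnG_comm ζ v, minOnG_comm ζ a c]
  refine minOnG_eq_min ?_ (mem_uIcc_of_le hca hav)
  rw [uIcc_of_le (hca.trans hav)]
  exact (isCompact_Icc.image_of_continuousOn hζ).bddBelow

lemma le_treeDist_of_mem_Icc (hζ : ContinuousOn ζ (Icc c b)) (hca : c ≤ a) (hv : v ∈ Icc a b) :
    ζ c + minOnG ζ a b - minOnG ζ a c - min (minOnG ζ a c) (minOnG ζ a b) ≤ treeDist ζ v c := by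
  have hcv : c ≤ v := hca.trans hv.1
  have hm : minOnG ζ v c ≤ ζ v :=
    minOnG_le_of_continuousOn (hζ.mono (uIcc_subset_Icc ⟨hcv, hv.2⟩ ⟨le_rfl, hcv.trans hv.2⟩))
      left_mem_uIcc
  have hM : minOnG ζ a b ≤ ζ v :=
    minOnG_le_of_continuousOn (hζ.mono (uIcc_subset_Icc ⟨hca, hv.1.trans hv.2⟩ ⟨hcv.trans hv.2,
      le_rfl⟩)) (mem_uIcc_of_le hv.1 hv.2)
  have hA : minOnG ζ v c ≤ minOnG ζ a c :=
    (minOnG_eq_min_of_le_of_le (hζ.mono (Icc_subset_Icc le_rfl hv.2)) hca hv.1).trans_le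
      (min_le_left _ _)
  rw [treeDist]
  rcases le_total (minOnG ζ a c) (minOnG ζ a b) with h | h
  · rw [min_eq_left h]; linarith
  · rw [min_eq_right h]; linarith

lemma exists_mem_Icc_treeDist_eq (hζ : ContinuousOn ζ (Icc c b)) (hca : c ≤ a) (hab : a ≤ b) :
    ∃ v ∈ Icc a b, treeDist ζ v c
      = ζ c + minOnG ζ a b - minOnG ζ a c - min (minOnG ζ a c) (minOnG ζ a b) := by
  set A := minOnG ζ a c
  set M := minOnG ζ a b
  have hζab : ContinuousOn ζ [[a, b]] :=
    hζ.mono (uIcc_subset_Icc ⟨hca, hab⟩ ⟨hca.trans hab, le_rfl⟩)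
  have hAa : A ≤ ζ a :=
    minOnG_le_of_continuousOn (hζ.mono (uIcc_subset_Icc ⟨hca, hab⟩ ⟨le_rfl, hca.trans hab⟩))
      left_mem_uIcc
  obtain ⟨v₁, hv₁, hζv₁⟩ := exists_eq_minOnG hζab
  rw [uIcc_of_le hab] at hv₁
  -- the value is attained where `ζ` first drops to `max A M` after `a`
  obtain ⟨v, hv, hζv, hfirst⟩ := exists_first_eq_of_continuousOn (L := max A M) hv₁.1
    (hζ.mono (Icc_subset_Icc hca hv₁.2))
    (max_le hAa (minOnG_le_of_continuousOn hζab left_mem_uIcc)) (hζv₁.trans_le (le_max_right A M))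
  have hAv : A ≤ minOnG ζ a v := le_minOnG fun u hu => by
    rw [uIcc_of_le hv.1] at hu
    exact (le_max_left A M).trans (hfirst u hu)
  refine ⟨v, ⟨hv.1, hv.2.trans hv₁.2⟩, ?_⟩
  rw [treeDist, hζv, minOnG_eq_min_of_le_of_le (hζ.mono (Icc_subset_Icc le_rfl (hv.2.trans hv₁.2)))
    hca hv.1, min_eq_left hAv]
  linarith [min_add_max A M]

lemma two_mul_minOnG_treeDist_of_le_of_le (hζ : ContinuousOn ζ (Icc c b)) (hca : c ≤ a)
    (hab : a ≤ b) :
    2 * minOnG (fun v => treeDist ζ v c) a b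
      = treeDist ζ a c + treeDist ζ b c - treeDist ζ a b := by
  have hbdd : BddBelow ((fun v => treeDist ζ v c) '' [[a, b]]) := by
    refine ⟨0, forall_mem_image.2 fun u hu => treeDist_nonneg (hζ.mono (uIcc_subset_Icc ?_ ?_))⟩
    · rw [uIcc_of_le hab] at hu
      exact ⟨hca.trans hu.1, hu.2⟩
    · exact ⟨le_rfl, hca.trans hab⟩
  obtain ⟨v, hv, hv_eq⟩ := exists_mem_Icc_treeDist_eq hζ hca hab
  have h : minOnG (fun v => treeDist ζ v c) a b
      = ζ c + minOnG ζ a b - minOnG ζ a c - min (minOnG ζ a c) (minOnG ζ a b) := by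
    refine le_antisymm ((minOnG_le hbdd (mem_uIcc_of_le hv.1 hv.2)).trans_eq hv_eq)
      (le_minOnG fun u hu => le_treeDist_of_mem_Icc hζ hca ?_)
    rwa [uIcc_of_le hab] at hu
  rw [h, treeDist, treeDist, treeDist, minOnG_eq_min_of_le_of_le hζ hca hab]
  ring

lemma two_mul_minOnG_treeDist_of_le_of_le' (hζ : ContinuousOn ζ (Icc a c)) (hab : a ≤ b)
    (hbc : b ≤ c) :
    2 * minOnG (fun v => treeDist ζ v c) a b
      = treeDist ζ a c + treeDist ζ b c - treeDist ζ a b := by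
  have hneg : ContinuousOn (fun t => ζ (-t)) (Icc (-c) (-a)) :=
    hζ.comp continuousOn_neg fun t ht => ⟨le_neg.1 ht.2, neg_le.1 ht.1⟩
  have h := two_mul_minOnG_treeDist_of_le_of_le hneg (neg_le_neg hbc) (neg_le_neg hab)
  simp only [treeDist_comp_neg, neg_neg] at h
  rw [minOnG_comp_neg (fun v => treeDist ζ v c), neg_neg, neg_neg, minOnG_comm] at h
  rw [h, treeDist_comm ζ b a]
  ring

end Gromov

section Excursion

variable {ζ : ℝ → ℝ} {t : ℝ}

lemma minOnG_zero_left (h0 : ζ 0 = 0) (hnn : ∀ x ∈ Icc (0 : ℝ) 1, 0 ≤ ζ x) (ht : t ∈ Icc 0 1) :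
    minOnG ζ 0 t = 0 := by
  have hsub : [[0, t]] ⊆ Icc 0 1 := uIcc_subset_Icc ⟨le_rfl, zero_le_one⟩ ht
  have hnn' : ∀ u ∈ [[0, t]], 0 ≤ ζ u := fun u hu => hnn u (hsub hu)
  exact le_antisymm ((minOnG_le ⟨0, forall_mem_image.2 hnn'⟩ left_mem_uIcc).trans_eq h0)
    (le_minOnG hnn')

lemma minOnG_one_left (h1 : ζ 1 = 0) (hnn : ∀ x ∈ Icc (0 : ℝ) 1, 0 ≤ ζ x) (ht : t ∈ Icc 0 1) :
    minOnG ζ 1 t = 0 := by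
  have hsub : [[1, t]] ⊆ Icc 0 1 := uIcc_subset_Icc ⟨zero_le_one, le_rfl⟩ ht
  have hnn' : ∀ u ∈ [[1, t]], 0 ≤ ζ u := fun u hu => hnn u (hsub hu)
  exact le_antisymm ((minOnG_le ⟨0, forall_mem_image.2 hnn'⟩ left_mem_uIcc).trans_eq h1)
    (le_minOnG hnn')

lemma treeDist_zero_left (h0 : ζ 0 = 0) (hnn : ∀ x ∈ Icc (0 : ℝ) 1, 0 ≤ ζ x)
    (ht : t ∈ Icc 0 1) : treeDist ζ 0 t = ζ t := by
  rw [treeDist, minOnG_zero_left h0 hnn ht, h0]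
  ring

lemma treeDist_one_left (h1 : ζ 1 = 0) (hnn : ∀ x ∈ Icc (0 : ℝ) 1, 0 ≤ ζ x)
    (ht : t ∈ Icc 0 1) : treeDist ζ 1 t = ζ t := by
  rw [treeDist, minOnG_one_left h1 hnn ht, h1]
  ring

end Excursion

section Reroot

variable {ζ : ℝ → ℝ} {θ x y : ℝ}

lemma wrap_of_lt {a : ℝ} (h : a < 1) : wrap a = a := if_pos h

lemma wrap_of_one_le {a : ℝ} (h : 1 ≤ a) : wrap a = a - 1 := if_neg (not_lt.2 h)

lemma wrap_add_mem_Icc (hθ : θ ∈ Ico 0 1) (hx : x ∈ Icc 0 1) : wrap (θ + x) ∈ Icc 0 1 := by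
  unfold wrap
  split_ifs <;> constructor <;> linarith [hθ.1, hθ.2, hx.1, hx.2]

lemma rerootZ_eq_treeDist (ζ : ℝ → ℝ) (θ x : ℝ) :
    rerootZ ζ θ x = treeDist ζ (wrap (θ + x)) θ :=
  rfl

lemma rerootZ_nonneg (hζ : ContinuousOn ζ (Icc 0 1)) (hθ : θ ∈ Ico 0 1) (hx : x ∈ Icc 0 1) :
    0 ≤ rerootZ ζ θ x :=
  treeDist_nonneg (hζ.mono (uIcc_subset_Icc (wrap_add_mem_Icc hθ hx) ⟨hθ.1, hθ.2.le⟩))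

lemma two_mul_minOnG_rerootZ_of_lt (hζ : ContinuousOn ζ (Icc 0 1)) (hθ : 0 ≤ θ) (hx : 0 ≤ x)
    (hxy : x ≤ y) (hy : θ + y < 1) :
    2 * minOnG (rerootZ ζ θ) x y
      = rerootZ ζ θ x + rerootZ ζ θ y - treeDist ζ (wrap (θ + x)) (wrap (θ + y)) := by
  have hR : minOnG (rerootZ ζ θ) x y = minOnG (fun v => treeDist ζ v θ) (θ + x) (θ + y) := by
    rw [← minOnG_comp_const_add]
    refine minOnG_congr fun v hv => ?_
    rw [uIcc_of_le hxy] at hv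
    rw [rerootZ_eq_treeDist, wrap_of_lt (by linarith [hv.2])]
  rw [hR, rerootZ_eq_treeDist, rerootZ_eq_treeDist, wrap_of_lt (by linarith), wrap_of_lt hy]
  exact two_mul_minOnG_treeDist_of_le_of_le (hζ.mono (Icc_subset_Icc hθ hy.le)) (by linarith)
    (by linarith)

lemma two_mul_minOnG_rerootZ_of_one_le (hζ : ContinuousOn ζ (Icc 0 1)) (hθ : θ < 1)
    (hx : 1 ≤ θ + x) (hxy : x ≤ y) (hy : y ≤ 1) :
    2 * minOnG (rerootZ ζ θ) x y
      = rerootZ ζ θ x + rerootZ ζ θ y - treeDist ζ (wrap (θ + x)) (wrap (θ + y)) := by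
  have hR : minOnG (rerootZ ζ θ) x y
      = minOnG (fun v => treeDist ζ v θ) (θ - 1 + x) (θ - 1 + y) := by
    rw [← minOnG_comp_const_add]
    refine minOnG_congr fun v hv => ?_
    rw [uIcc_of_le hxy] at hv
    rw [rerootZ_eq_treeDist, wrap_of_one_le (by linarith [hv.1]), add_sub_right_comm]
  rw [hR, rerootZ_eq_treeDist, rerootZ_eq_treeDist, wrap_of_one_le hx,
    wrap_of_one_le (by linarith), add_sub_right_comm θ x, add_sub_right_comm θ y]
  exact two_mul_minOnG_treeDist_of_le_of_le' (hζ.mono (Icc_subset_Icc (by linarith) hθ.le))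
    (by linarith : θ - 1 + x ≤ θ - 1 + y) (by linarith)

lemma two_mul_minOnG_rerootZ_before_wrap (hζ : ContinuousOn ζ (Icc 0 1)) (h0 : ζ 0 = 0)
    (h1 : ζ 1 = 0) (hnn : ∀ x ∈ Icc (0 : ℝ) 1, 0 ≤ ζ x) (hθ : θ ∈ Ico 0 1) (hx0 : 0 ≤ x)
    (hx : θ + x ≤ 1) :
    2 * minOnG (rerootZ ζ θ) x (1 - θ) = treeDist ζ (θ + x) θ + ζ θ - ζ (θ + x) := by
  have hθI : θ ∈ Icc (0 : ℝ) 1 := ⟨hθ.1, hθ.2.le⟩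
  have e := minOnG_comp_const_add (fun v => treeDist ζ v θ) θ x (1 - θ)
  rw [add_sub_cancel] at e
  have hR : minOnG (rerootZ ζ θ) x (1 - θ) = minOnG (fun v => treeDist ζ v θ) (θ + x) 1 := by
    rw [← e]
    refine minOnG_congr fun v hv => ?_
    rw [uIcc_of_le (by linarith)] at hv
    rcases hv.2.lt_or_eq with hlt | rfl
    · rw [rerootZ_eq_treeDist, wrap_of_lt (by linarith)]
    · -- the rotation sends `1 - θ` to `0`, not `1`; both are at distance `ζ θ` from `θ`
      rw [rerootZ_eq_treeDist, add_sub_cancel, wrap_of_one_le le_rfl, sub_self,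
        treeDist_zero_left h0 hnn hθI]
      exact (treeDist_one_left h1 hnn hθI).symm
  rw [hR, two_mul_minOnG_treeDist_of_le_of_le (hζ.mono (Icc_subset_Icc hθ.1 le_rfl))
    (by linarith) hx, treeDist_one_left h1 hnn hθI, treeDist_comm ζ _ 1,
    treeDist_one_left h1 hnn ⟨by linarith [hθ.1], hx⟩]

lemma two_mul_minOnG_rerootZ_after_wrap (hζ : ContinuousOn ζ (Icc 0 1)) (h0 : ζ 0 = 0)
    (hnn : ∀ x ∈ Icc (0 : ℝ) 1, 0 ≤ ζ x) (hθ : θ ∈ Ico 0 1) (hy : 1 ≤ θ + y) (hy1 : y ≤ 1) :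
    2 * minOnG (rerootZ ζ θ) (1 - θ) y
      = ζ θ + treeDist ζ (θ - 1 + y) θ - ζ (θ - 1 + y) := by
  have e := minOnG_comp_const_add (fun v => treeDist ζ v θ) (θ - 1) (1 - θ) y
  rw [show θ - 1 + (1 - θ) = 0 by ring] at e
  have hR : minOnG (rerootZ ζ θ) (1 - θ) y
      = minOnG (fun v => treeDist ζ v θ) 0 (θ - 1 + y) := by
    rw [← e]
    refine minOnG_congr fun v hv => ?_
    rw [uIcc_of_le (by linarith)] at hv
    rw [rerootZ_eq_treeDist, wrap_of_one_le (by linarith [hv.1]), add_sub_right_comm]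
  rw [hR, two_mul_minOnG_treeDist_of_le_of_le' (hζ.mono (Icc_subset_Icc le_rfl hθ.2.le))
    (by linarith) (by linarith), treeDist_zero_left h0 hnn ⟨hθ.1, hθ.2.le⟩,
    treeDist_zero_left h0 hnn ⟨by linarith, by linarith [hθ.2]⟩]

lemma two_mul_minOnG_rerootZ_of_lt_of_one_le (hζ : ContinuousOn ζ (Icc 0 1)) (h0 : ζ 0 = 0)
    (h1 : ζ 1 = 0) (hnn : ∀ x ∈ Icc (0 : ℝ) 1, 0 ≤ ζ x) (hθ : θ ∈ Ico 0 1) (hx0 : 0 ≤ x)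
    (hx : θ + x < 1) (hy : 1 ≤ θ + y) (hy1 : y ≤ 1) :
    2 * minOnG (rerootZ ζ θ) x y
      = rerootZ ζ θ x + rerootZ ζ θ y - treeDist ζ (wrap (θ + x)) (wrap (θ + y)) := by
  obtain ⟨hθ0, hθ1⟩ := id hθ
  have hsplit : minOnG (rerootZ ζ θ) x y
      = min (minOnG (rerootZ ζ θ) x (1 - θ)) (minOnG (rerootZ ζ θ) (1 - θ) y) :=
    minOnG_eq_min ⟨0, forall_mem_image.2 fun v hv => rerootZ_nonneg hζ hθ
      (uIcc_subset_Icc ⟨hx0, by linarith⟩ ⟨by linarith, hy1⟩ hv)⟩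
      (mem_uIcc_of_le (by linarith) (by linarith))
  have hleft := two_mul_minOnG_rerootZ_before_wrap hζ h0 h1 hnn hθ hx0 hx.le
  have hright := two_mul_minOnG_rerootZ_after_wrap hζ h0 hnn hθ hy hy1
  have hmin : minOnG ζ (θ + x) (θ - 1 + y)
      = min (minOnG ζ (θ + x) θ) (minOnG ζ θ (θ - 1 + y)) :=
    minOnG_eq_min (isCompact_uIcc.image_of_continuousOn
      (hζ.mono (uIcc_subset_Icc ⟨by linarith, hx.le⟩ ⟨by linarith, by linarith⟩))).bddBelow
      (mem_uIcc_of_ge (by linarith) (by linarith))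
  rw [hsplit, rerootZ_eq_treeDist, rerootZ_eq_treeDist, wrap_of_lt hx, wrap_of_one_le hy,
    add_sub_right_comm θ y]
  simp only [treeDist] at hleft hright ⊢
  rw [hmin, minOnG_comm ζ θ (θ - 1 + y)]
  rcases le_total (minOnG ζ (θ + x) θ) (minOnG ζ (θ - 1 + y) θ) with h | h
  · rw [min_eq_left h, min_eq_right (by linarith)]
    linarith
  · rw [min_eq_right h, min_eq_left (by linarith)]
    linarith

lemma two_mul_minOnG_rerootZ (hζ : ContinuousOn ζ (Icc 0 1)) (h0 : ζ 0 = 0) (h1 : ζ 1 = 0)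
    (hnn : ∀ x ∈ Icc (0 : ℝ) 1, 0 ≤ ζ x) (hθ : θ ∈ Ico 0 1) (hx : x ∈ Icc 0 1)
    (hy : y ∈ Icc 0 1) :
    2 * minOnG (rerootZ ζ θ) x y
      = rerootZ ζ θ x + rerootZ ζ θ y - treeDist ζ (wrap (θ + x)) (wrap (θ + y)) := by
  wlog hxy : x ≤ y generalizing x y
  · rw [minOnG_comm, treeDist_comm, this hy hx (le_of_not_ge hxy)]
    ring
  rcases lt_or_ge (θ + y) 1 with hy' | hy'
  · exact two_mul_minOnG_rerootZ_of_lt hζ hθ.1 hx.1 hxy hy'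
  rcases le_or_gt 1 (θ + x) with hx' | hx'
  · exact two_mul_minOnG_rerootZ_of_one_le hζ hθ.2 hx' hxy hy.2
  · exact two_mul_minOnG_rerootZ_of_lt_of_one_le hζ h0 h1 hnn hθ hx.1 hx' hy' hy.2

end Reroot

/-- The rerooted excursion `ζ^(θ)` encodes the same tree metric as `ζ` up to the rotation
`x ↦ x ⊕ θ`: `d_{ζ^(θ)}(x,y) = d_ζ(x⊕θ, y⊕θ)` for all `x, y ∈ [0,1]`. -/
theorem treeDist_reroot (ζ : ℝ → ℝ)
    (hc : ContinuousOn ζ (Set.Icc 0 1))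
    (h0 : ζ 0 = 0) (h1 : ζ 1 = 0)
    (hnn : ∀ x ∈ Set.Icc (0:ℝ) 1, 0 ≤ ζ x)
    (θ : ℝ) (hθ : θ ∈ Set.Ico (0:ℝ) 1) :
    ∀ x ∈ Set.Icc (0:ℝ) 1, ∀ y ∈ Set.Icc (0:ℝ) 1,
      treeDist (rerootZ ζ θ) x y = treeDist ζ (wrap (x + θ)) (wrap (y + θ)) := by
  intro x hx y hy
  have h := two_mul_minOnG_rerootZ hc h0 h1 hnn hθ hx hy
  rw [add_comm x, add_comm y, treeDist]
  linarith
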